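/- arXiv:1412.8146 — 2 statements merged into one kernel-verified Lean document; each statement's English description precedes it below -/
import Mathlib

section
/- Convergence of L^{p(·)}-bounded martingales: Let p : Ω → [1, ∞] be a variable exponent. Then every martingale, and every nonnegative submartingale, f = (f_n)_{n≥0} satisfying sup_n ‖f_n‖_{p(·)} < ∞ converges almost everywhere to a measurable function f_∞ with ‖f_∞‖_{p(·)} < ∞. -/
/-! An `L^{p(·)}`-bounded submartingale is `L¹`-bounded: if the modular of `u` is at most one,
then `u ≤ 1` a.e. on `{p = ∞}` and `u ≤ u ^ p + 1` elsewhere, so `∫ u ≤ 1 + μ Ω`. Doob's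
convergence theorem then gives an a.e. limit, and Fatou's lemma, applied to both parts of the
modular, bounds the Luxemburg norm of the limit by `sup_n ‖f_n‖_{p(·)}`. -/

open MeasureTheory ENNReal Filter Topology

/-- The variable exponent modular
`ρ_{p(·)}(u) = ∫_{Ω∖Ω_∞} u^{p(ω)} dμ + ess sup_{Ω_∞} u`, where `Ω_∞ = {p = ∞}`. -/
noncomputable def varModular {Ω : Type*} [MeasurableSpace Ω] (μ : Measure Ω)
    (p : Ω → ℝ≥0∞) (u : Ω → ℝ≥0∞) : ℝ≥0∞ :=
  (∫⁻ ω in {ω | p ω ≠ ∞}, u ω ^ (p ω).toReal ∂μ) +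
    essSup u (μ.restrict {ω | p ω = ∞})

/-- The Luxemburg norm `‖u‖_{p(·)} = inf {γ > 0 : ρ_{p(·)}(u/γ) ≤ 1}`. -/
noncomputable def varNorm {Ω : Type*} [MeasurableSpace Ω] (μ : Measure Ω)
    (p : Ω → ℝ≥0∞) (u : Ω → ℝ≥0∞) : ℝ≥0∞ :=
  sInf {γ : ℝ≥0∞ | 0 < γ ∧ γ ≠ ∞ ∧ varModular μ p (fun ω => u ω / γ) ≤ 1}

theorem ENNReal.le_liminf_add {u v : ℕ → ℝ≥0∞} :
    liminf u atTop + liminf v atTop ≤ liminf (u + v) atTop := by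
  simp only [liminf_eq_iSup_iInf_of_nat]
  refine ENNReal.iSup_add_iSup_le fun i j => le_iSup_of_le (max i j) (le_iInf₂ fun n hn => ?_)
  exact add_le_add (iInf₂_le n (le_of_max_le_left hn)) (iInf₂_le n (le_of_max_le_right hn))

section VariableExponent

variable {Ω : Type*} [MeasurableSpace Ω] {μ : Measure Ω} {p : Ω → ℝ≥0∞}

theorem varModular_mono {u v : Ω → ℝ≥0∞} (huv : u ≤ v) : varModular μ p u ≤ varModular μ p v :=
  add_le_add (lintegral_mono fun ω => ENNReal.rpow_le_rpow (huv ω) ENNReal.toReal_nonneg)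
    (essSup_mono_ae (Eventually.of_forall huv))

theorem varModular_div_le_one_of_varNorm_lt {u : Ω → ℝ≥0∞} {γ : ℝ≥0∞}
    (hγ : varNorm μ p u < γ) : varModular μ p (fun ω => u ω / γ) ≤ 1 := by
  obtain ⟨γ', ⟨-, -, hγ'⟩, hγ'γ⟩ := sInf_lt_iff.mp hγ
  exact (varModular_mono fun ω => ENNReal.div_le_div_left hγ'γ.le _).trans hγ'

theorem lintegral_le_one_add_measure_univ_of_varModular_le_one (hpm : Measurable p)
    (hp1 : ∀ ω, 1 ≤ p ω) {u : Ω → ℝ≥0∞} (hu : varModular μ p u ≤ 1) :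
    ∫⁻ ω, u ω ∂μ ≤ 1 + μ Set.univ := by
  set S : Set Ω := {ω | p ω = ∞}
  have hS : MeasurableSet S := hpm (measurableSet_singleton ∞)
  have hSc : Sᶜ = {ω | p ω ≠ ∞} := rfl
  have h_inf : ∀ᵐ ω ∂μ, ω ∈ S → u ω ≤ 1 := by
    rw [← ae_restrict_iff' hS]
    filter_upwards [ae_le_essSup (μ := μ.restrict S) u] with ω hω
    exact hω.trans (le_add_self.trans hu)
  have h_fin : ∀ ω ∉ S, u ω ≤ u ω ^ (p ω).toReal + 1 := by
    intro ω hω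
    rcases le_or_gt (u ω) 1 with h | h
    · exact h.trans le_add_self
    · have h1p : 1 ≤ (p ω).toReal := by
        simpa using ENNReal.toReal_mono hω (hp1 ω)
      calc u ω = u ω ^ (1 : ℝ) := (ENNReal.rpow_one _).symm
        _ ≤ u ω ^ (p ω).toReal := ENNReal.rpow_le_rpow_of_exponent_le h.le h1p
        _ ≤ _ := le_self_add
  calc ∫⁻ ω, u ω ∂μ ≤ ∫⁻ ω, Sᶜ.indicator (fun ω => u ω ^ (p ω).toReal) ω + 1 ∂μ := by
        refine lintegral_mono_ae ?_
        filter_upwards [h_inf] with ω hω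
        by_cases hωS : ω ∈ S
        · exact (hω hωS).trans le_add_self
        · simpa [Set.indicator_of_mem (show ω ∈ Sᶜ from hωS)] using h_fin ω hωS
    _ = (∫⁻ ω in {ω | p ω ≠ ∞}, u ω ^ (p ω).toReal ∂μ) + μ Set.univ := by
        rw [lintegral_add_right _ measurable_const, lintegral_indicator hS.compl, hSc,
          lintegral_const, one_mul]
    _ ≤ 1 + μ Set.univ := by gcongr; exact le_self_add.trans hu

theorem lintegral_le_of_varNorm_lt (hpm : Measurable p) (hp1 : ∀ ω, 1 ≤ p ω)
    {u : Ω → ℝ≥0∞} {γ : ℝ≥0∞} (hγ : varNorm μ p u < γ) (hγ_top : γ ≠ ∞) :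
    ∫⁻ ω, u ω ∂μ ≤ γ * (1 + μ Set.univ) := by
  have hγ0 : γ ≠ 0 := (pos_of_gt hγ).ne'
  calc ∫⁻ ω, u ω ∂μ = γ * ∫⁻ ω, u ω / γ ∂μ := by
        rw [← lintegral_const_mul' _ _ hγ_top]
        simp only [ENNReal.mul_div_cancel hγ0 hγ_top]
    _ ≤ γ * (1 + μ Set.univ) := by
        gcongr
        exact lintegral_le_one_add_measure_univ_of_varModular_le_one hpm hp1
          (varModular_div_le_one_of_varNorm_lt hγ)

theorem essSup_le_liminf_of_ae_tendsto {ν : Measure Ω} {u : ℕ → Ω → ℝ≥0∞} {v : Ω → ℝ≥0∞}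
    (hlim : ∀ᵐ ω ∂ν, Tendsto (fun n => u n ω) atTop (𝓝 (v ω))) :
    essSup v ν ≤ liminf (fun n => essSup (u n) ν) atTop := by
  refine essSup_le_of_ae_le _ ?_
  filter_upwards [hlim, ae_all_iff.2 fun n => ae_le_essSup (u n)] with ω hω hle
  rw [← hω.liminf_eq]
  exact liminf_le_liminf (Eventually.of_forall hle)

theorem varModular_le_liminf_of_ae_tendsto (hpm : Measurable p) {u : ℕ → Ω → ℝ≥0∞}
    {v : Ω → ℝ≥0∞} (hu : ∀ n, Measurable (u n))
    (hlim : ∀ᵐ ω ∂μ, Tendsto (fun n => u n ω) atTop (𝓝 (v ω))) :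
    varModular μ p v ≤ liminf (fun n => varModular μ p (u n)) atTop := by
  have h_int : (∫⁻ ω in {ω | p ω ≠ ∞}, v ω ^ (p ω).toReal ∂μ) ≤
      liminf (fun n => ∫⁻ ω in {ω | p ω ≠ ∞}, u n ω ^ (p ω).toReal ∂μ) atTop := by
    refine le_trans (lintegral_mono_ae ?_) (lintegral_liminf_le fun n =>
      (hu n).pow hpm.ennreal_toReal)
    filter_upwards [ae_restrict_of_ae hlim] with ω hω
    exact ((ENNReal.continuous_rpow_const.tendsto _).comp hω).liminf_eq.ge
  exact (add_le_add h_int (essSup_le_liminf_of_ae_tendsto (ae_restrict_of_ae hlim))).trans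
    ENNReal.le_liminf_add

theorem varNorm_le_iSup_of_ae_tendsto (hpm : Measurable p) {u : ℕ → Ω → ℝ≥0∞}
    {v : Ω → ℝ≥0∞} (hu : ∀ n, Measurable (u n))
    (hlim : ∀ᵐ ω ∂μ, Tendsto (fun n => u n ω) atTop (𝓝 (v ω))) :
    varNorm μ p v ≤ ⨆ n, varNorm μ p (u n) := by
  refine le_of_forall_gt_imp_ge_of_dense fun γ hγ => ?_
  rcases eq_or_ne γ ∞ with rfl | hγ_top
  · exact le_top
  have hγ0 : γ ≠ 0 := (pos_of_gt hγ).ne'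
  have hlim_γ : ∀ᵐ ω ∂μ, Tendsto (fun n => u n ω / γ) atTop (𝓝 (v ω / γ)) := by
    filter_upwards [hlim] with ω hω
    exact ENNReal.Tendsto.div_const hω (Or.inr hγ0)
  have hmod : varModular μ p (fun ω => v ω / γ) ≤ 1 := by
    refine (varModular_le_liminf_of_ae_tendsto hpm (fun n => (hu n).div_const γ) hlim_γ).trans ?_
    refine liminf_le_of_frequently_le' (Frequently.of_forall fun n => ?_)
    exact varModular_div_le_one_of_varNorm_lt ((le_iSup _ n).trans_lt hγ)
  exact sInf_le ⟨pos_iff_ne_zero.2 hγ0, hγ_top, hmod⟩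

end VariableExponent

theorem martingale_convergence_variable_exponent_general
    {Ω : Type*} {m0 : MeasurableSpace Ω} (μ : Measure Ω) [IsProbabilityMeasure μ]
    (ℱ : Filtration ℕ m0)
    (p : Ω → ℝ≥0∞) (hpm : Measurable p) (hp1 : ∀ ω, 1 ≤ p ω)
    (f : ℕ → Ω → ℝ)
    (hf : Martingale f ℱ μ ∨ (Submartingale f ℱ μ ∧ ∀ n ω, 0 ≤ f n ω))
    (hbdd : (⨆ n, varNorm μ p fun ω => ENNReal.ofReal |f n ω|) < ∞) :
    ∃ finf : Ω → ℝ, Measurable finf ∧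
      (∀ᵐ ω ∂μ, Tendsto (fun n => f n ω) atTop (𝓝 (finf ω))) ∧
      varNorm μ p (fun ω => ENNReal.ofReal |finf ω|) < ∞ := by
  have hsub : Submartingale f ℱ μ := hf.elim Martingale.submartingale And.left
  have hmeas (n : ℕ) : Measurable (f n) := ((hsub.stronglyMeasurable n).mono (ℱ.le n)).measurable
  set M := ⨆ n, varNorm μ p fun ω => ENNReal.ofReal |f n ω|
  have hM_top : M + 1 ≠ ∞ := ENNReal.add_ne_top.2 ⟨hbdd.ne, ENNReal.one_ne_top⟩
  have hL1 (n : ℕ) : eLpNorm (f n) 1 μ ≤ ((M + 1) * 2).toNNReal := by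
    rw [ENNReal.coe_toNNReal (ENNReal.mul_ne_top hM_top ENNReal.ofNat_ne_top)]
    calc eLpNorm (f n) 1 μ = ∫⁻ ω, ENNReal.ofReal |f n ω| ∂μ := by
          simp_rw [eLpNorm_one_eq_lintegral_enorm, Real.enorm_eq_ofReal_abs]
      _ ≤ (M + 1) * (1 + μ Set.univ) := lintegral_le_of_varNorm_lt hpm hp1
          ((le_iSup _ n).trans_lt (ENNReal.lt_add_right hbdd.ne one_ne_zero)) hM_top
      _ = (M + 1) * 2 := by rw [measure_univ, one_add_one_eq_two]
  have htend := hsub.ae_tendsto_limitProcess hL1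
  refine ⟨ℱ.limitProcess f μ,
    (ℱ.stronglyMeasurable_limitProcess.mono (iSup_le ℱ.le)).measurable, htend, ?_⟩
  refine (varNorm_le_iSup_of_ae_tendsto hpm (fun n => (hmeas n).abs.ennreal_ofReal) ?_).trans_lt
    hbdd
  filter_upwards [htend] with ω hω
  exact (ENNReal.continuous_ofReal.comp continuous_abs).continuousAt.tendsto.comp hω

/-- **Convergence of `L^{p(·)}`-bounded martingales.**
Every martingale, and every nonnegative submartingale, that is bounded in `L^{p(·)}`
(`p : Ω → [1,∞]`) converges almost everywhere to a function `f_∞ ∈ L^{p(·)}`. -/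
theorem martingale_convergence_variable_exponent
    {Ω : Type*} {m0 : MeasurableSpace Ω} (μ : Measure Ω) [IsProbabilityMeasure μ]
    (ℱ : Filtration ℕ m0) (hsup : (⨆ n, (ℱ n : MeasurableSpace Ω)) = m0)
    (p : Ω → ℝ≥0∞) (hpm : Measurable p) (hp1 : ∀ ω, 1 ≤ p ω)
    (f : ℕ → Ω → ℝ)
    (hf : Martingale f ℱ μ ∨ (Submartingale f ℱ μ ∧ ∀ n ω, 0 ≤ f n ω))
    (hbdd : (⨆ n, varNorm μ p fun ω => ENNReal.ofReal |f n ω|) < ∞) :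
    ∃ finf : Ω → ℝ, Measurable finf ∧
      (∀ᵐ ω ∂μ, Tendsto (fun n => f n ω) atTop (𝓝 (finf ω))) ∧
      varNorm μ p (fun ω => ENNReal.ofReal |finf ω|) < ∞ :=
  martingale_convergence_variable_exponent_general μ ℱ p hpm hp1 f hf hbdd
end

section
/- Embedding of variable exponent Lebesgue spaces: Let p, q : Ω → [1, ∞] be variable exponents. Then L^{p(·)} ⊆ L^{q(·)} if and only if p(ω) ≥ q(ω) for almost every ω, and in that case ‖f‖_{q(·)} ≤ 2‖f‖_{p(·)} for every f ∈ L^{p(·)}. -/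
open MeasureTheory ENNReal Filter Topology

open scoped NNReal
open Function

/-!
If `q ≤ p` a.e. and `ρ_p(w) ≤ 1`, then `w ≤ 1` a.e. on `{p = ∞}` and, pointwise on `{q < ∞}`,
`(w/2)^q ≤ ½ (1 + 1_{p<∞} w^p)`; integrating over a probability space gives
`ρ_q(w/2) ≤ ½ (1 + ρ_p(w)) ≤ 1`, hence `‖u‖_q ≤ 2 ‖u‖_p`.

Conversely, if `p < q` on a set of positive measure, then `p ≤ r < s ≤ q` on a set `F` of positive
measure for some rationals `r < s`, and we may assume `q = ∞` on all of `F` or `q < ∞` on all of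
`F`. Non-atomicity gives disjoint `A_n ⊆ F` of positive measure `a_n ≤ (2^{-n})^{s/(s-r)}`. With
heights `c_n = a_n^{-1/s}` the step function `u = ∑ c_n 1_{A_n}` has
`ρ_p(u) ≤ μ(Ω) + ∑ a_n^{1-r/s} < ∞`, so `‖u‖_p < ∞`; but `c_n → ∞` and `∫_{A_n} c_n^s = 1`, so for
every `γ` either `ρ_q(u/γ) = ∞` or its `ess sup` part exceeds `1`, and `‖u‖_q = ∞`.
-/

namespace ENNReal

theorem rpow_le_one_add_rpow (x : ℝ≥0∞) {t r : ℝ} (ht : 0 ≤ t) (htr : t ≤ r) :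
    x ^ t ≤ 1 + x ^ r := by
  rcases le_total x 1 with hx | hx
  · exact (rpow_le_one hx ht).trans le_self_add
  · exact (rpow_le_rpow_of_exponent_le hx htr).trans le_add_self

theorem div_rpow_le_inv_mul_rpow (x : ℝ≥0∞) {γ : ℝ≥0∞} (hγ : 1 ≤ γ) {t : ℝ} (ht : 1 ≤ t) :
    (x / γ) ^ t ≤ γ⁻¹ * x ^ t := by
  rw [div_eq_mul_inv, mul_rpow_of_nonneg _ _ (zero_le_one.trans ht), mul_comm]
  gcongr
  calc γ⁻¹ ^ t ≤ γ⁻¹ ^ (1 : ℝ) := rpow_le_rpow_of_exponent_ge (ENNReal.inv_le_one.2 hγ) ht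
    _ = γ⁻¹ := rpow_one _

theorem tsum_eq_top_of_eventually_ge {f : ℕ → ℝ≥0∞} {δ : ℝ≥0∞} (hδ : δ ≠ 0)
    (h : ∀ᶠ n in atTop, δ ≤ f n) : ∑' n, f n = ∞ := by
  by_contra hf
  obtain ⟨n, hn, hlt⟩ := (h.and ((ENNReal.tendsto_atTop_zero_of_tsum_ne_top hf).eventually
    (gt_mem_nhds (pos_iff_ne_zero.2 hδ)))).exists
  exact hn.not_gt hlt

theorem le_essSup_of_forall_mem {α : Type*} [MeasurableSpace α] {ν : Measure α}
    {f : α → ℝ≥0∞} {s : Set α} {b : ℝ≥0∞} (hs : ν s ≠ 0) (h : ∀ x ∈ s, b ≤ f x) :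
    b ≤ essSup f ν := by
  by_contra! hlt
  refine hs (measure_eq_zero_iff_ae_notMem.2 ?_)
  filter_upwards [ae_lt_of_essSup_lt hlt] with x hx hxs using (h x hxs).not_gt hx

theorem rpow_neg_inv_rpow_mul_self {a : ℝ≥0∞} (ha0 : a ≠ 0) (ha : a ≠ ∞) (s r : ℝ) :
    (a ^ (-s⁻¹)) ^ r * a = a ^ (1 - r / s) := by
  calc (a ^ (-s⁻¹)) ^ r * a = a ^ (-s⁻¹ * r) * a ^ (1 : ℝ) := by
        rw [← ENNReal.rpow_mul, ENNReal.rpow_one]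
    _ = a ^ (-s⁻¹ * r + 1) := (ENNReal.rpow_add _ _ ha0 ha).symm
    _ = a ^ (1 - r / s) := by congr 1; ring

end ENNReal

section Modular

variable {Ω : Type*} [MeasurableSpace Ω] {μ : Measure Ω} {p q : Ω → ℝ≥0∞}

theorem varModular_div_le_inv_mul (hpm : Measurable p) (hp1 : ∀ ω, 1 ≤ p ω)
    (u : Ω → ℝ≥0∞) {γ : ℝ≥0∞} (hγ : 1 ≤ γ) :
    varModular μ p (fun ω => u ω / γ) ≤ γ⁻¹ * varModular μ p u := by
  have hint : ∫⁻ ω in {ω | p ω ≠ ∞}, (u ω / γ) ^ (p ω).toReal ∂μ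
      ≤ γ⁻¹ * ∫⁻ ω in {ω | p ω ≠ ∞}, u ω ^ (p ω).toReal ∂μ := by
    rw [← lintegral_const_mul' _ _ (inv_ne_top.2 (one_pos.trans_le hγ).ne')]
    refine setLIntegral_mono' (hpm (measurableSet_singleton ∞)).compl fun ω hω => ?_
    exact ENNReal.div_rpow_le_inv_mul_rpow _ hγ
      (by simpa using ENNReal.toReal_mono hω (hp1 ω))
  have hsup : essSup (fun ω => u ω / γ) (μ.restrict {ω | p ω = ∞})
      = γ⁻¹ * essSup u (μ.restrict {ω | p ω = ∞}) := by
    simp_rw [div_eq_mul_inv, mul_comm _ γ⁻¹]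
    exact ENNReal.essSup_const_mul
  rw [varModular, varModular, hsup, mul_add]
  gcongr

theorem varNorm_le_max_one_varModular (hpm : Measurable p) (hp1 : ∀ ω, 1 ≤ p ω)
    (u : Ω → ℝ≥0∞) : varNorm μ p u ≤ max 1 (varModular μ p u) := by
  set γ := max 1 (varModular μ p u)
  rcases eq_or_ne (varModular μ p u) ∞ with h | h
  · simp [γ, h]
  have hγ : 1 ≤ γ := le_max_left _ _
  refine sInf_le ⟨one_pos.trans_le hγ, max_ne_top one_ne_top h, ?_⟩
  calc varModular μ p (fun ω => u ω / γ) ≤ γ⁻¹ * varModular μ p u :=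
        varModular_div_le_inv_mul hpm hp1 u hγ
    _ ≤ γ⁻¹ * γ := by gcongr; exact le_max_right _ _
    _ = 1 := ENNReal.inv_mul_cancel (one_pos.trans_le hγ).ne' (max_ne_top one_ne_top h)

theorem varNorm_eq_top_of_one_lt_varModular {u : Ω → ℝ≥0∞}
    (h : ∀ γ, 0 < γ → γ ≠ ∞ → 1 < varModular μ p (fun ω => u ω / γ)) :
    varNorm μ p u = ∞ := by
  rw [varNorm, sInf_eq_top]
  rintro γ ⟨hγ0, hγ, hle⟩
  exact absurd hle (h γ hγ0 hγ).not_ge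

end Modular

section Embedding

variable {Ω : Type*} [MeasurableSpace Ω] {μ : Measure Ω} [IsProbabilityMeasure μ]
  {p q : Ω → ℝ≥0∞}

theorem setLIntegral_div_two_rpow_le (hpm : Measurable p) (hqm : Measurable q)
    (hq1 : ∀ ω, 1 ≤ q ω) (hqp : ∀ᵐ ω ∂μ, q ω ≤ p ω) {w : Ω → ℝ≥0∞}
    (hw : essSup w (μ.restrict {ω | p ω = ∞}) ≤ 1) :
    ∫⁻ ω in {ω | q ω ≠ ∞}, (w ω / 2) ^ (q ω).toReal ∂μ
      ≤ 2⁻¹ * (1 + ∫⁻ ω in {ω | p ω ≠ ∞}, w ω ^ (p ω).toReal ∂μ) := by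
  have hpinf : MeasurableSet {ω | p ω = ∞} := hpm (measurableSet_singleton ∞)
  have hqfin : MeasurableSet {ω | q ω ≠ ∞} := (hqm (measurableSet_singleton ∞)).compl
  have hw_le : ∀ᵐ ω ∂μ, p ω = ∞ → w ω ≤ 1 := by
    have := ENNReal.ae_le_essSup (μ := μ.restrict {ω | p ω = ∞}) w
    rw [ae_restrict_iff' hpinf] at this
    filter_upwards [this] with ω hω hpω using (hω hpω).trans hw
  have hpointwise : ∀ᵐ ω ∂μ.restrict {ω | q ω ≠ ∞}, (w ω / 2) ^ (q ω).toReal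
      ≤ 2⁻¹ * (1 + {ω | p ω ≠ ∞}.indicator (fun ω => w ω ^ (p ω).toReal) ω) := by
    rw [ae_restrict_iff' hqfin]
    filter_upwards [hqp, hw_le] with ω hqpω hwω hqω
    have hq : 1 ≤ (q ω).toReal := by simpa using ENNReal.toReal_mono hqω (hq1 ω)
    refine (ENNReal.div_rpow_le_inv_mul_rpow _ one_le_two hq).trans ?_
    gcongr
    by_cases hpω : p ω = ∞
    · exact (ENNReal.rpow_le_one (hwω hpω) (zero_le_one.trans hq)).trans le_self_add
    · rw [Set.indicator_of_mem hpω]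
      exact ENNReal.rpow_le_one_add_rpow _ (zero_le_one.trans hq)
        (ENNReal.toReal_mono hpω hqpω)
  calc ∫⁻ ω in {ω | q ω ≠ ∞}, (w ω / 2) ^ (q ω).toReal ∂μ
      ≤ ∫⁻ ω in {ω | q ω ≠ ∞},
          2⁻¹ * (1 + {ω | p ω ≠ ∞}.indicator (fun ω => w ω ^ (p ω).toReal) ω) ∂μ :=
        lintegral_mono_ae hpointwise
    _ ≤ ∫⁻ ω, 2⁻¹ * (1 + {ω | p ω ≠ ∞}.indicator (fun ω => w ω ^ (p ω).toReal) ω) ∂μ :=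
        setLIntegral_le_lintegral _ _
    _ = 2⁻¹ * (1 + ∫⁻ ω in {ω | p ω ≠ ∞}, w ω ^ (p ω).toReal ∂μ) := by
        rw [lintegral_const_mul' _ _ (by norm_num), lintegral_add_left measurable_const,
          lintegral_indicator (show MeasurableSet {ω | p ω ≠ ∞} from hpinf.compl),
          lintegral_const, measure_univ, one_mul]

theorem varModular_div_two_le_one (hpm : Measurable p) (hqm : Measurable q)
    (hq1 : ∀ ω, 1 ≤ q ω) (hqp : ∀ᵐ ω ∂μ, q ω ≤ p ω) {w : Ω → ℝ≥0∞}
    (hw : varModular μ p w ≤ 1) : varModular μ q (fun ω => w ω / 2) ≤ 1 := by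
  have hsup : essSup (fun ω => w ω / 2) (μ.restrict {ω | q ω = ∞})
      ≤ 2⁻¹ * essSup w (μ.restrict {ω | p ω = ∞}) := by
    have hsub : {ω | q ω = ∞} ≤ᵐ[μ] {ω | p ω = ∞} := by
      filter_upwards [hqp] with ω hω hqω
      exact top_le_iff.1 (hqω ▸ hω)
    calc essSup (fun ω => w ω / 2) (μ.restrict {ω | q ω = ∞})
        ≤ essSup (fun ω => 2⁻¹ * w ω) (μ.restrict {ω | p ω = ∞}) := by
          simp_rw [div_eq_mul_inv, mul_comm _ (2⁻¹ : ℝ≥0∞)]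
          exact essSup_mono_measure' (Measure.restrict_mono_ae hsub)
      _ = 2⁻¹ * essSup w (μ.restrict {ω | p ω = ∞}) := ENNReal.essSup_const_mul
  calc varModular μ q (fun ω => w ω / 2)
      ≤ 2⁻¹ * (1 + ∫⁻ ω in {ω | p ω ≠ ∞}, w ω ^ (p ω).toReal ∂μ)
        + 2⁻¹ * essSup w (μ.restrict {ω | p ω = ∞}) :=
        add_le_add (setLIntegral_div_two_rpow_le hpm hqm hq1 hqp
          (le_add_self.trans hw)) hsup
    _ = 2⁻¹ * (1 + varModular μ p w) := by
        rw [varModular, mul_add, mul_add, mul_add, add_assoc]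
    _ ≤ 2⁻¹ * (1 + 1) := by gcongr
    _ = 1 := by rw [one_add_one_eq_two, ENNReal.inv_mul_cancel two_ne_zero ENNReal.ofNat_ne_top]

theorem varNorm_le_two_mul (hpm : Measurable p) (hqm : Measurable q)
    (hq1 : ∀ ω, 1 ≤ q ω) (hqp : ∀ᵐ ω ∂μ, q ω ≤ p ω) (u : Ω → ℝ≥0∞) :
    varNorm μ q u ≤ 2 * varNorm μ p u := by
  conv_rhs =>
    rw [varNorm, sInf_eq_iInf', ENNReal.mul_iInf_of_ne two_ne_zero ENNReal.ofNat_ne_top]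
  refine le_iInf fun ⟨γ, hγ0, hγ, hγu⟩ => sInf_le ⟨by positivity, by finiteness, ?_⟩
  have hdiv : ∀ ω, u ω / (2 * γ) = u ω / γ / 2 := fun ω => by
    simp only [div_eq_mul_inv, ENNReal.mul_inv (Or.inl two_ne_zero) (Or.inl ofNat_ne_top)]
    ring
  simpa only [hdiv] using varModular_div_two_le_one hpm hqm hq1 hqp hγu

end Embedding

namespace MeasureTheory.Measure

/-- Not Mathlib's `NoAtoms`, which only asks singletons to be null. -/
def IsNonatomic {Ω : Type*} [MeasurableSpace Ω] (μ : Measure Ω) : Prop :=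
  ∀ s : Set Ω, MeasurableSet s → 0 < μ s → ∃ t ⊆ s, MeasurableSet t ∧ 0 < μ t ∧ μ t < μ s

namespace IsNonatomic

variable {Ω : Type*} [MeasurableSpace Ω] {μ : Measure Ω} [IsFiniteMeasure μ] {s : Set Ω}

theorem exists_subset_measure_le_half (hμ : μ.IsNonatomic) (hs : MeasurableSet s)
    (hs0 : 0 < μ s) : ∃ t ⊆ s, MeasurableSet t ∧ 0 < μ t ∧ μ t ≤ μ s / 2 := by
  obtain ⟨t, hts, ht, ht0, hlt⟩ := hμ s hs hs0
  have hdiff : μ (s \ t) = μ s - μ t :=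
    measure_sdiff hts ht.nullMeasurableSet (measure_ne_top μ t)
  rcases le_total (μ t) (μ s / 2) with h | h
  · exact ⟨t, hts, ht, ht0, h⟩
  · refine ⟨s \ t, Set.sdiff_subset, hs.diff ht, hdiff ▸ tsub_pos_of_lt hlt, ?_⟩
    rw [hdiff, tsub_le_iff_right]
    calc μ s = μ s / 2 + μ s / 2 := (ENNReal.add_halves _).symm
      _ ≤ μ s / 2 + μ t := by gcongr

theorem exists_subset_measure_le (hμ : μ.IsNonatomic) (hs : MeasurableSet s) (hs0 : 0 < μ s)
    {ε : ℝ≥0∞} (hε : 0 < ε) : ∃ t ⊆ s, MeasurableSet t ∧ 0 < μ t ∧ μ t ≤ ε := by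
  have halving : ∀ n : ℕ, ∃ t ⊆ s, MeasurableSet t ∧ 0 < μ t ∧ μ t ≤ μ s * 2⁻¹ ^ n := by
    intro n
    induction n with
    | zero => exact ⟨s, subset_rfl, hs, hs0, by simp⟩
    | succ n ih =>
      obtain ⟨t, hts, ht, ht0, htn⟩ := ih
      obtain ⟨t', ht't, ht', ht'0, ht'le⟩ := hμ.exists_subset_measure_le_half ht ht0
      refine ⟨t', ht't.trans hts, ht', ht'0, ht'le.trans ?_⟩
      rw [pow_succ, ← mul_assoc, ← div_eq_mul_inv]
      gcongr
  have hlim : Tendsto (fun n : ℕ => μ s * 2⁻¹ ^ n) atTop (𝓝 0) := by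
    simpa using ENNReal.Tendsto.const_mul
      (ENNReal.tendsto_pow_atTop_nhds_zero_of_lt_one (by norm_num))
      (Or.inr (measure_ne_top μ s))
  obtain ⟨n, hn⟩ := (hlim.eventually (gt_mem_nhds hε)).exists
  obtain ⟨t, hts, ht, ht0, htn⟩ := halving n
  exact ⟨t, hts, ht, ht0, htn.trans hn.le⟩

theorem exists_pairwise_disjoint_subsets (hμ : μ.IsNonatomic) (hs : MeasurableSet s)
    (hs0 : 0 < μ s) {ε : ℕ → ℝ≥0∞} (hε : ∀ n, 0 < ε n) :
    ∃ A : ℕ → Set Ω, (∀ n, MeasurableSet (A n)) ∧ (∀ n, A n ⊆ s) ∧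
      Pairwise (Disjoint on A) ∧ ∀ n, 0 < μ (A n) ∧ μ (A n) ≤ ε n := by
  have step : ∀ (n : ℕ) (T : Set Ω), MeasurableSet T → 0 < μ T →
      ∃ t ⊆ T, MeasurableSet t ∧ (0 < μ t ∧ μ t ≤ ε n) ∧ 0 < μ (T \ t) := by
    intro n T hT hT0
    obtain ⟨t, htT, ht, ht0, hle⟩ :=
      hμ.exists_subset_measure_le hT hT0 (lt_min (hε n) (ENNReal.half_pos hT0.ne'))
    refine ⟨t, htT, ht, ⟨ht0, hle.trans (min_le_left _ _)⟩, ?_⟩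
    rw [measure_sdiff htT ht.nullMeasurableSet (measure_ne_top μ t)]
    exact tsub_pos_of_lt ((hle.trans (min_le_right _ _)).trans_lt
      (ENNReal.half_lt_self hT0.ne' (measure_ne_top μ T)))
  choose! piece hsub hmeas hpiece hrest using step
  let S : ℕ → Set Ω := fun n => Nat.rec s (fun k T => T \ piece k T) n
  have hS : ∀ n, MeasurableSet (S n) ∧ 0 < μ (S n) := by
    intro n
    induction n with
    | zero => exact ⟨hs, hs0⟩
    | succ k ih => exact ⟨ih.1.diff (hmeas k _ ih.1 ih.2), hrest k _ ih.1 ih.2⟩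
  have hanti : Antitone S := antitone_nat_of_succ_le fun k => Set.sdiff_subset
  have hpieceS : ∀ n, piece n (S n) ⊆ S n := fun n => hsub n _ (hS n).1 (hS n).2
  refine ⟨fun n => piece n (S n), fun n => hmeas n _ (hS n).1 (hS n).2,
    fun n => (hpieceS n).trans (hanti n.zero_le), ?_, fun n => hpiece n _ (hS n).1 (hS n).2⟩
  refine (pairwise_disjoint_on _).2 fun m n hmn => ?_
  exact Set.disjoint_sdiff_right.mono_right ((hpieceS n).trans (hanti hmn))

theorem exists_disjoint_heights (hμ : μ.IsNonatomic) {F : Set Ω} (hF : MeasurableSet F)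
    (hF0 : 0 < μ F) {r s : ℝ≥0} (hrs : r < s) :
    ∃ (A : ℕ → Set Ω) (c : ℕ → ℝ≥0∞), (∀ n, MeasurableSet (A n)) ∧ (∀ n, A n ⊆ F) ∧
      Pairwise (Disjoint on A) ∧ (∀ n, 0 < μ (A n)) ∧ (∀ n, c n ≠ ∞) ∧
      (∀ n, c n ^ (s : ℝ) * μ (A n) = 1) ∧ ∑' n, c n ^ (r : ℝ) * μ (A n) ≠ ∞ ∧
      Tendsto c atTop (𝓝 ∞) := by
  have hs : 0 < (s : ℝ) := r.coe_nonneg.trans_lt hrs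
  set θ : ℝ := 1 - r / s
  have hθ : 0 < θ := sub_pos.2 ((div_lt_one hs).2 hrs)
  obtain ⟨A, hAm, hAF, hA, hAμ⟩ := hμ.exists_pairwise_disjoint_subsets hF hF0
    (ε := fun n => (2⁻¹ ^ n) ^ θ⁻¹)
    fun n => ENNReal.rpow_pos (ENNReal.pow_pos (by norm_num) n) (by finiteness)
  have ha0 : ∀ n, μ (A n) ≠ 0 := fun n => (hAμ n).1.ne'
  have hpow : ∀ (t : ℝ) n, (μ (A n) ^ (-(s : ℝ)⁻¹)) ^ t * μ (A n) = μ (A n) ^ (1 - t / s) :=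
    fun t n => ENNReal.rpow_neg_inv_rpow_mul_self (ha0 n) (measure_ne_top μ (A n)) s t
  refine ⟨A, fun n => μ (A n) ^ (-(s : ℝ)⁻¹), hAm, hAF, hA, fun n => (hAμ n).1,
    fun n => ?_, fun n => ?_, ?_, ?_⟩
  · simp [ENNReal.rpow_eq_top_iff, ha0 n, measure_ne_top μ (A n)]
  · rw [hpow, div_self hs.ne', sub_self, ENNReal.rpow_zero]
  · refine ne_top_of_le_ne_top (b := ∑' n : ℕ, 2⁻¹ ^ n) ?_ (ENNReal.tsum_le_tsum fun n => ?_)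
    · rw [ENNReal.tsum_geometric, ENNReal.one_sub_inv_two, inv_inv]
      exact ENNReal.ofNat_ne_top
    · calc (μ (A n) ^ (-(s : ℝ)⁻¹)) ^ (r : ℝ) * μ (A n) = μ (A n) ^ θ := hpow _ n
        _ ≤ ((2⁻¹ ^ n) ^ θ⁻¹) ^ θ := ENNReal.rpow_le_rpow (hAμ n).2 hθ.le
        _ = 2⁻¹ ^ n := ENNReal.rpow_inv_rpow hθ.ne' _
  · have hsum : ∑' n, μ (A n) ≠ ∞ := measure_iUnion hA hAm ▸ measure_ne_top μ _
    have hlim := (ENNReal.continuous_rpow_const (y := -(s : ℝ)⁻¹)).tendsto 0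
      |>.comp (ENNReal.tendsto_atTop_zero_of_tsum_ne_top hsum)
    rwa [ENNReal.zero_rpow_of_neg (neg_neg_of_pos (inv_pos.2 hs))] at hlim

end IsNonatomic

end MeasureTheory.Measure

section StepFunction

variable {Ω : Type*} {A : ℕ → Set Ω} {c : ℕ → ℝ≥0∞} {ω : Ω}

noncomputable def stepFunction (A : ℕ → Set Ω) (c : ℕ → ℝ≥0∞) (ω : Ω) : ℝ≥0∞ :=
  ∑' n, (A n).indicator (fun _ => c n) ω

theorem stepFunction_of_mem (hA : Pairwise (Disjoint on A)) {n : ℕ} (hω : ω ∈ A n) :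
    stepFunction A c ω = c n := by
  rw [stepFunction, tsum_eq_single n fun m hm =>
    Set.indicator_of_notMem ((hA hm).notMem_of_mem_right hω) _, Set.indicator_of_mem hω]

theorem stepFunction_of_notMem (hω : ω ∉ ⋃ n, A n) : stepFunction A c ω = 0 := by
  simp only [Set.mem_iUnion, not_exists] at hω
  simp [stepFunction, hω]

theorem stepFunction_ne_top (hA : Pairwise (Disjoint on A)) (hc : ∀ n, c n ≠ ∞) (ω : Ω) :
    stepFunction A c ω ≠ ∞ := by
  by_cases hω : ω ∈ ⋃ n, A n
  · obtain ⟨n, hn⟩ := Set.mem_iUnion.1 hω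
    rw [stepFunction_of_mem hA hn]
    exact hc n
  · rw [stepFunction_of_notMem hω]
    exact ENNReal.zero_ne_top

variable [MeasurableSpace Ω] {μ : Measure Ω}

theorem measurable_stepFunction (hAm : ∀ n, MeasurableSet (A n)) :
    Measurable (stepFunction A c) :=
  Measurable.tsum fun n => measurable_const.indicator (hAm n)

theorem lintegral_stepFunction (hAm : ∀ n, MeasurableSet (A n)) :
    ∫⁻ ω, stepFunction A c ω ∂μ = ∑' n, c n * μ (A n) := by
  simp_rw [stepFunction]
  rw [lintegral_tsum fun n => (measurable_const.indicator (hAm n)).aemeasurable]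
  simp_rw [lintegral_indicator_const (hAm _)]

variable {p q : Ω → ℝ≥0∞} {F : Set Ω}

theorem varModular_stepFunction_lt_top [IsFiniteMeasure μ] (hAm : ∀ n, MeasurableSet (A n))
    (hA : Pairwise (Disjoint on A)) (hAF : ∀ n, A n ⊆ F) {r : ℝ≥0}
    (hpF : ∀ ω ∈ F, p ω ≤ r) (hc : ∑' n, c n ^ (r : ℝ) * μ (A n) ≠ ∞) :
    varModular μ p (stepFunction A c) < ∞ := by
  have hpointwise : ∀ ω, stepFunction A c ω ^ (p ω).toReal
      ≤ 1 + stepFunction A (fun n => c n ^ (r : ℝ)) ω := by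
    intro ω
    by_cases hω : ω ∈ ⋃ n, A n
    · obtain ⟨n, hn⟩ := Set.mem_iUnion.1 hω
      rw [stepFunction_of_mem hA hn, stepFunction_of_mem hA hn]
      exact ENNReal.rpow_le_one_add_rpow _ ENNReal.toReal_nonneg
        (ENNReal.toReal_le_coe_of_le_coe (hpF ω (hAF n hn)))
    · rw [stepFunction_of_notMem hω]
      exact (ENNReal.rpow_le_one zero_le_one ENNReal.toReal_nonneg).trans le_self_add
  have hsup : essSup (stepFunction A c) (μ.restrict {ω | p ω = ∞}) = 0 := by
    have hnull : μ.restrict {ω | p ω = ∞} (⋃ n, A n) = 0 := by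
      have hAp : ∀ n, A n ∩ {ω | p ω = ∞} = ∅ := fun n =>
        Set.eq_empty_iff_forall_notMem.2 fun ω ⟨hω, hpω⟩ =>
          ENNReal.coe_ne_top (top_le_iff.1 (hpω ▸ hpF ω (hAF n hω)))
      simp [Measure.restrict_apply (MeasurableSet.iUnion hAm), Set.iUnion_inter, hAp]
    rw [ENNReal.essSup_eq_zero_iff]
    filter_upwards [measure_eq_zero_iff_ae_notMem.1 hnull] with ω hω
      using stepFunction_of_notMem hω
  rw [varModular, hsup, add_zero]
  calc ∫⁻ ω in {ω | p ω ≠ ∞}, stepFunction A c ω ^ (p ω).toReal ∂μ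
      ≤ ∫⁻ ω, 1 + stepFunction A (fun n => c n ^ (r : ℝ)) ω ∂μ :=
        (setLIntegral_le_lintegral _ _).trans (lintegral_mono hpointwise)
    _ = μ Set.univ + ∑' n, c n ^ (r : ℝ) * μ (A n) := by
        rw [lintegral_add_left measurable_const, lintegral_const, one_mul,
          lintegral_stepFunction hAm]
    _ < ∞ := ENNReal.add_lt_top.2 ⟨measure_lt_top _ _, hc.lt_top⟩

theorem one_lt_varModular_stepFunction_div (hAm : ∀ n, MeasurableSet (A n))
    (hA : Pairwise (Disjoint on A)) (hA0 : ∀ n, 0 < μ (A n))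
    (hAq : ∀ n, A n ⊆ {ω | q ω = ∞}) (hc : Tendsto c atTop (𝓝 ∞))
    {γ : ℝ≥0∞} (hγ0 : 0 < γ) (hγ : γ ≠ ∞) :
    1 < varModular μ q (fun ω => stepFunction A c ω / γ) := by
  obtain ⟨n, hn⟩ := (hc.eventually (lt_mem_nhds hγ.lt_top)).exists
  have hAn : μ.restrict {ω | q ω = ∞} (A n) ≠ 0 := by
    rw [Measure.restrict_apply (hAm n), Set.inter_eq_left.2 (hAq n)]
    exact (hA0 n).ne'
  calc 1 < c n / γ := by rwa [ENNReal.lt_div_iff_mul_lt (Or.inl hγ0.ne') (Or.inl hγ), one_mul]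
    _ ≤ essSup (fun ω => stepFunction A c ω / γ) (μ.restrict {ω | q ω = ∞}) :=
        ENNReal.le_essSup_of_forall_mem hAn fun ω hω => by rw [stepFunction_of_mem hA hω]
    _ ≤ varModular μ q (fun ω => stepFunction A c ω / γ) := le_add_self

theorem varModular_stepFunction_div_eq_top (hAm : ∀ n, MeasurableSet (A n))
    (hA : Pairwise (Disjoint on A)) (hAq : ∀ n, A n ⊆ {ω | q ω ≠ ∞}) {s : ℝ≥0}
    (hqs : ∀ n, ∀ ω ∈ A n, (s : ℝ≥0∞) ≤ q ω) (hcs : ∀ n, c n ^ (s : ℝ) * μ (A n) = 1)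
    (hc : Tendsto c atTop (𝓝 ∞)) {γ : ℝ≥0∞} (hγ0 : 0 < γ) (hγ : γ ≠ ∞) :
    varModular μ q (fun ω => stepFunction A c ω / γ) = ∞ := by
  have hterm : ∀ᶠ n in atTop, (γ ^ (s : ℝ))⁻¹
      ≤ ∫⁻ ω in A n, (stepFunction A c ω / γ) ^ (q ω).toReal ∂μ := by
    filter_upwards [hc.eventually (lt_mem_nhds hγ.lt_top)] with n hn
    have hcγ : 1 ≤ c n / γ := by
      rw [ENNReal.le_div_iff_mul_le (Or.inl hγ0.ne') (Or.inl hγ), one_mul]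
      exact hn.le
    calc (γ ^ (s : ℝ))⁻¹ = ∫⁻ _ in A n, (c n / γ) ^ (s : ℝ) ∂μ := by
          rw [setLIntegral_const, ENNReal.div_rpow_of_nonneg _ _ s.coe_nonneg, div_eq_mul_inv,
            mul_right_comm, hcs, one_mul]
      _ ≤ ∫⁻ ω in A n, (stepFunction A c ω / γ) ^ (q ω).toReal ∂μ := by
          refine setLIntegral_mono' (hAm n) fun ω hω => ?_
          rw [stepFunction_of_mem hA hω]
          refine ENNReal.rpow_le_rpow_of_exponent_le hcγ ?_
          simpa using ENNReal.toReal_mono (hAq n hω) (hqs n ω hω)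
  have hγs : (γ ^ (s : ℝ))⁻¹ ≠ 0 := ENNReal.inv_ne_zero.2 (by finiteness)
  rw [varModular, eq_top_iff]
  calc ∞ = ∑' n, ∫⁻ ω in A n, (stepFunction A c ω / γ) ^ (q ω).toReal ∂μ :=
        (ENNReal.tsum_eq_top_of_eventually_ge hγs hterm).symm
    _ = ∫⁻ ω in ⋃ n, A n, (stepFunction A c ω / γ) ^ (q ω).toReal ∂μ :=
        (lintegral_iUnion hAm hA _).symm
    _ ≤ ∫⁻ ω in {ω | q ω ≠ ∞}, (stepFunction A c ω / γ) ^ (q ω).toReal ∂μ :=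
        lintegral_mono_set (Set.iUnion_subset hAq)
    _ ≤ _ := le_self_add

end StepFunction

section Counterexample

variable {Ω : Type*} [MeasurableSpace Ω] {μ : Measure Ω} {p q : Ω → ℝ≥0∞}

theorem exists_pos_measure_subset_or_subset_compl {s t : Set Ω} (hs : MeasurableSet s)
    (ht : MeasurableSet t) (hs0 : 0 < μ s) :
    ∃ s' ⊆ s, MeasurableSet s' ∧ 0 < μ s' ∧ (s' ⊆ t ∨ s' ⊆ tᶜ) := by
  by_cases h : μ (s ∩ t) = 0
  · refine ⟨s \ t, Set.sdiff_subset, hs.diff ht, ?_, Or.inr fun x hx => hx.2⟩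
    rwa [← measure_inter_add_sdiff s ht, h, zero_add] at hs0
  · exact ⟨s ∩ t, Set.inter_subset_left, hs.inter ht, pos_iff_ne_zero.2 h,
      Or.inl Set.inter_subset_right⟩

theorem exists_exponent_gap_of_not_ae_le (hpm : Measurable p) (hqm : Measurable q)
    (h : ¬ ∀ᵐ ω ∂μ, q ω ≤ p ω) :
    ∃ F : Set Ω, MeasurableSet F ∧ 0 < μ F ∧
      ∃ r s : ℝ≥0, r < s ∧ ∀ ω ∈ F, p ω ≤ r ∧ (s : ℝ≥0∞) ≤ q ω := by
  let G : ℚ × ℚ → Set Ω := fun x => {ω | p ω ≤ ENNReal.ofReal x.1 ∧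
    ENNReal.ofReal x.1 < ENNReal.ofReal x.2 ∧ ENNReal.ofReal x.2 ≤ q ω}
  have hcover : {ω | ¬ q ω ≤ p ω} ⊆ ⋃ x, G x := fun ω hω => by
    obtain ⟨a, -, hpa, haq⟩ := ENNReal.lt_iff_exists_rat_btwn.1 (not_le.1 hω)
    obtain ⟨b, -, hab, hbq⟩ := ENNReal.lt_iff_exists_rat_btwn.1 haq
    exact Set.mem_iUnion.2 ⟨(a, b), hpa.le, hab, hbq.le⟩
  obtain ⟨x, hx⟩ : ∃ x, μ (G x) ≠ 0 := by
    by_contra! hG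
    exact h (ae_iff.2 (measure_mono_null hcover (measure_iUnion_null hG)))
  obtain ⟨-, -, hrs, -⟩ := nonempty_of_measure_ne_zero hx
  refine ⟨G x, ?_, pos_iff_ne_zero.2 hx, (x.1 : ℝ).toNNReal, (x.2 : ℝ).toNNReal,
    ENNReal.coe_lt_coe.1 hrs, fun ω hω => ⟨hω.1, hω.2.2⟩⟩
  exact (measurableSet_le hpm measurable_const).inter
    ((MeasurableSet.const _).inter (measurableSet_le measurable_const hqm))

theorem exists_varNorm_lt_top_varNorm_eq_top [IsFiniteMeasure μ] (hμ : μ.IsNonatomic)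
    (hpm : Measurable p) (hqm : Measurable q) (hp1 : ∀ ω, 1 ≤ p ω) {F : Set Ω}
    (hFm : MeasurableSet F) (hF0 : 0 < μ F) {r s : ℝ≥0} (hrs : r < s)
    (hF : ∀ ω ∈ F, p ω ≤ r ∧ (s : ℝ≥0∞) ≤ q ω) :
    ∃ u : Ω → ℝ, Measurable u ∧ varNorm μ p (fun ω => ENNReal.ofReal |u ω|) < ∞ ∧
      varNorm μ q (fun ω => ENNReal.ofReal |u ω|) = ∞ := by
  obtain ⟨F', hF'F, hF'm, hF'0, hF'q⟩ :=
    exists_pos_measure_subset_or_subset_compl hFm (hqm (measurableSet_singleton ∞)) hF0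
  obtain ⟨A, c, hAm, hAF', hA, hA0, hc_top, hcs, hcr, hc⟩ :=
    hμ.exists_disjoint_heights hF'm hF'0 hrs
  have hAF : ∀ n, A n ⊆ F := fun n => (hAF' n).trans hF'F
  set U := stepFunction A c
  have hU : (fun ω => ENNReal.ofReal |(U ω).toReal|) = U := funext fun ω => by
    rw [abs_of_nonneg ENNReal.toReal_nonneg,
      ENNReal.ofReal_toReal (stepFunction_ne_top hA hc_top ω)]
  refine ⟨fun ω => (U ω).toReal, (measurable_stepFunction hAm).ennreal_toReal, ?_, ?_⟩ <;>
    rw [hU]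
  · exact (varNorm_le_max_one_varModular hpm hp1 U).trans_lt (max_lt ENNReal.one_lt_top
      (varModular_stepFunction_lt_top hAm hA hAF (fun ω hω => (hF ω hω).1) hcr))
  refine varNorm_eq_top_of_one_lt_varModular fun γ hγ0 hγ => ?_
  rcases hF'q with hq | hq
  · exact one_lt_varModular_stepFunction_div hAm hA hA0 (fun n => (hAF' n).trans hq) hc
      hγ0 hγ
  · rw [varModular_stepFunction_div_eq_top hAm hA (fun n => (hAF' n).trans hq)
      (fun n ω hω => (hF ω (hAF n hω)).2) hcs hc hγ0 hγ]
    exact ENNReal.one_lt_top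

end Counterexample

/-- **Embedding of variable exponent Lebesgue spaces.** For variable exponents
`p, q : Ω → [1,∞]` on a non-atomic probability space, `L^{p(·)} ⊆ L^{q(·)}` iff
`q ≤ p` a.e., and in that case `‖f‖_{q(·)} ≤ 2‖f‖_{p(·)}` for every `f ∈ L^{p(·)}`. -/
theorem embedding_variable_exponent
    {Ω : Type*} [MeasurableSpace Ω] (μ : Measure Ω) [IsProbabilityMeasure μ]
    (hna : ∀ s : Set Ω, MeasurableSet s → 0 < μ s →
      ∃ t ⊆ s, MeasurableSet t ∧ 0 < μ t ∧ μ t < μ s)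
    (p q : Ω → ℝ≥0∞) (hpm : Measurable p) (hqm : Measurable q)
    (hp1 : ∀ ω, 1 ≤ p ω) (hq1 : ∀ ω, 1 ≤ q ω) :
    ({u : Ω → ℝ | Measurable u ∧ varNorm μ p (fun ω => ENNReal.ofReal |u ω|) < ∞} ⊆
        {u : Ω → ℝ | Measurable u ∧ varNorm μ q (fun ω => ENNReal.ofReal |u ω|) < ∞} ↔
      ∀ᵐ ω ∂μ, q ω ≤ p ω) ∧
    ((∀ᵐ ω ∂μ, q ω ≤ p ω) → ∀ u : Ω → ℝ, Measurable u →
      varNorm μ p (fun ω => ENNReal.ofReal |u ω|) < ∞ →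
      varNorm μ q (fun ω => ENNReal.ofReal |u ω|) ≤
        2 * varNorm μ p (fun ω => ENNReal.ofReal |u ω|)) := by
  refine ⟨⟨fun hincl => ?_, fun hqp u ⟨hum, hu⟩ => ⟨hum, ?_⟩⟩,
    fun hqp u _ _ => varNorm_le_two_mul hpm hqm hq1 hqp _⟩
  · by_contra hqp
    obtain ⟨F, hFm, hF0, r, s, hrs, hF⟩ := exists_exponent_gap_of_not_ae_le hpm hqm hqp
    obtain ⟨u, hum, hup, huq⟩ :=
      exists_varNorm_lt_top_varNorm_eq_top hna hpm hqm hp1 hFm hF0 hrs hF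
    exact (hincl ⟨hum, hup⟩).2.ne huq
  · exact (varNorm_le_two_mul hpm hqm hq1 hqp _).trans_lt (ENNReal.mul_lt_top (by simp) hu)
end
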